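/- arXiv:1510.02032 — 7 statements merged into one kernel-verified Lean document; each statement's English description precedes it below -/
import Mathlib

section
/- For all integers k ≥ 2 and n > k, there exist a prime power q and an (n,k,k) linear exact-repair regeneration code over 𝔽_q with parameters (α,β,F) = (k, k−1, k²−1); that is, there exist a (k²−1)-dimensional 𝔽_q-vector space 𝓕 and subspaces W_1,…,W_n of 𝓕, each of dimension at most k, that satisfy the data-recovery property and the node-repair property with repair dimension k−1. -/
/-- An `(card ι, k, d)` linear exact-repair regeneration code with parameters
`(α, β, F)` over a field `K`: an `F`-dimensional ambient space `V` with node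
subspaces `W i` of dimension at most `α`, such that any `k` nodes span `V`
(data recovery), and any node can be repaired from any `d` other nodes, each
contributing a subspace of dimension at most `β` (node repair). -/
def IsERCode {K : Type} [Field K] {V : Type} [AddCommGroup V] [Module K V]
    {ι : Type} (k d α β F : ℕ) (W : ι → Submodule K V) : Prop :=
  FiniteDimensional K V ∧
  Module.finrank K V = F ∧
  (∀ i, Module.finrank K (W i) ≤ α) ∧
  (∀ A : Finset ι, A.card = k → ∑ j ∈ A, W j = ⊤) ∧
  (∀ (x : ι) (A : Finset ι), x ∉ A → A.card = d →
    ∃ S : ι → Submodule K V,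
      (∀ j ∈ A, S j ≤ W j ∧ Module.finrank K (S j) ≤ β) ∧
      W x ≤ ∑ j ∈ A, S j)

/-- Append a new node `Wst` to the family `W`, giving a family indexed by `Option ι`. -/
def extendCode {K : Type} [Field K] {V : Type} [AddCommGroup V] [Module K V]
    {ι : Type} (W : ι → Submodule K V) (Wst : Submodule K V) :
    Option ι → Submodule K V :=
  fun o => o.elim Wst W

/-!
Take `V = Mₖ(K) / K·1` and let node `i` store the image of `uᵢ ⊗ Kᵏ`, where
`uᵢ = (1, tᵢ, …, tᵢ^(k-1))` for distinct `tᵢ ∈ K`. Any `k` of the `uᵢ` form a basis `b`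
(Vandermonde), with dual vectors `b*ⱼ = b.coordVec j` satisfying `∑ⱼ bⱼ ⊗ b*ⱼ = 1`; hence
`M = ∑ⱼ bⱼ ⊗ (b*ⱼ M)` and any `k` nodes span `V`. To repair node `x`, helper `j` sends `uⱼ ⊗ ker ⟨uₓ, ·⟩`, of dimension
`k - 1`: if `uₓ = ∑ⱼ cⱼ bⱼ`, then `uₓ ⊗ y - ⟨uₓ, y⟩ 1 = ∑ⱼ bⱼ ⊗ (cⱼ y - ⟨uₓ, y⟩ b*ⱼ)` and
`⟨uₓ, b*ⱼ⟩ = cⱼ`, so each `cⱼ y - ⟨uₓ, y⟩ b*ⱼ` lies in `ker ⟨uₓ, ·⟩`, while the scalar matrix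
vanishes in `V`.
-/

open Matrix Module

section RankOneNodes

variable {K m ι : Type*} [Field K] [DecidableEq m]

noncomputable def Module.Basis.coordVec (b : Basis ι K (m → K)) (j : ι) : m → K :=
  fun a => b.repr (Pi.single a 1) j

lemma Module.Basis.dotProduct_coordVec [Fintype m] (b : Basis ι K (m → K)) (v : m → K) (j : ι) :
    v ⬝ᵥ b.coordVec j = b.repr v j := by
  conv_rhs => rw [pi_eq_sum_univ' v]
  simp [dotProduct, coordVec]

lemma Module.Basis.sum_vecMulVec_coordVec [Fintype ι] (b : Basis ι K (m → K)) :
    ∑ j, vecMulVec (b j) (b.coordVec j) = 1 := by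
  ext a c
  have := congrFun (b.sum_repr (Pi.single c 1)) a
  simp only [Finset.sum_apply, Pi.smul_apply, smul_eq_mul] at this
  simpa [vecMulVec_apply, coordVec, Matrix.sum_apply, one_apply, Pi.single_apply, mul_comm,
    eq_comm] using this

noncomputable def rankOneNode (u : m → K) (Y : Submodule K (m → K)) :
    Submodule K (Matrix m m K ⧸ K ∙ (1 : Matrix m m K)) :=
  Y.map ((K ∙ (1 : Matrix m m K)).mkQ ∘ₗ vecMulVecBilin K K u)

lemma mkQ_vecMulVec_mem_rankOneNode (u : m → K) {Y : Submodule K (m → K)} {y : m → K}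
    (hy : y ∈ Y) : (K ∙ (1 : Matrix m m K)).mkQ (vecMulVec u y) ∈ rankOneNode u Y :=
  Submodule.mem_map_of_mem hy

lemma rankOneNode_mono (u : m → K) {Y Y' : Submodule K (m → K)} (h : Y ≤ Y') :
    rankOneNode u Y ≤ rankOneNode u Y' :=
  Submodule.map_mono h

variable [Fintype m]

lemma finrank_rankOneNode_le (u : m → K) (Y : Submodule K (m → K)) :
    finrank K (rankOneNode u Y) ≤ finrank K Y :=
  Submodule.finrank_map_le _ _

lemma finrank_matrix_quotient_scalars [Nonempty m] :
    finrank K (Matrix m m K ⧸ K ∙ (1 : Matrix m m K)) = Fintype.card m ^ 2 - 1 := by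
  have hquot := (K ∙ (1 : Matrix m m K)).finrank_quotient_add_finrank
  rw [finrank_span_singleton one_ne_zero, finrank_matrix] at hquot
  simp only [finrank_self, mul_one] at hquot
  rw [sq]
  omega

lemma sum_rankOneNode_eq_top [Fintype ι] (b : Basis ι K (m → K)) :
    ∑ j, rankOneNode (b j) ⊤ = ⊤ := by
  refine eq_top_iff.mpr fun v _ => ?_
  obtain ⟨M, rfl⟩ := (K ∙ (1 : Matrix m m K)).mkQ_surjective v
  have hM : M = ∑ j, vecMulVec (b j) (b.coordVec j ᵥ* M) := by
    calc M = (∑ j, vecMulVec (b j) (b.coordVec j)) * M := by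
          rw [b.sum_vecMulVec_coordVec, Matrix.one_mul]
      _ = _ := by simp only [Finset.sum_mul, vecMulVec_mul]
  rw [hM, map_sum]
  exact Submodule.sum_mem _ fun j _ => Finset.single_le_sum (f := fun j => rankOneNode (b j) ⊤)
    (fun _ _ => bot_le) (Finset.mem_univ j) (mkQ_vecMulVec_mem_rankOneNode _ Submodule.mem_top)

lemma vecMulVec_sub_dotProduct_smul_one [Fintype ι] (b : Basis ι K (m → K)) (v y : m → K) :
    vecMulVec v y - (v ⬝ᵥ y) • 1 =
      ∑ j, vecMulVec (b j) (b.repr v j • y - (v ⬝ᵥ y) • b.coordVec j) := by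
  simp only [vecMulVec_sub, vecMulVec_smul, Finset.sum_sub_distrib, ← Finset.smul_sum,
    b.sum_vecMulVec_coordVec]
  congr 1
  conv_lhs => rw [← b.sum_repr v]
  exact map_sum ((vecMulVecBilin K K).flip y) _ _ |>.trans (by simp)

lemma repr_smul_sub_smul_coordVec_mem_ker (b : Basis ι K (m → K)) (v y : m → K) (j : ι) :
    b.repr v j • y - (v ⬝ᵥ y) • b.coordVec j ∈ LinearMap.ker (dotProductBilin K K v) := by
  simp [dotProduct_sub, dotProduct_smul, b.dotProduct_coordVec, mul_comm]

lemma rankOneNode_le_sum_rankOneNode_ker [Fintype ι] (b : Basis ι K (m → K)) (v : m → K) :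
    rankOneNode v ⊤ ≤ ∑ j, rankOneNode (b j) (LinearMap.ker (dotProductBilin K K v)) := by
  rintro _ ⟨y, -, rfl⟩
  have hscalar : (K ∙ (1 : Matrix m m K)).mkQ (vecMulVec v y) =
      (K ∙ (1 : Matrix m m K)).mkQ
        (∑ j, vecMulVec (b j) (b.repr v j • y - (v ⬝ᵥ y) • b.coordVec j)) := by
    rw [Submodule.mkQ_apply, Submodule.mkQ_apply, Submodule.Quotient.eq,
      ← vecMulVec_sub_dotProduct_smul_one, sub_sub_cancel]
    exact Submodule.smul_mem _ _ (Submodule.mem_span_singleton_self _)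
  rw [LinearMap.comp_apply, vecMulVecBilin_apply_apply, hscalar, map_sum]
  exact Submodule.sum_mem _ fun j _ => Finset.single_le_sum
    (f := fun j => rankOneNode (b j) (LinearMap.ker (dotProductBilin K K v)))
    (fun _ _ => bot_le) (Finset.mem_univ j)
    (mkQ_vecMulVec_mem_rankOneNode _ (repr_smul_sub_smul_coordVec_mem_ker b v y j))

lemma finrank_ker_dotProductBilin {v : m → K} (hv : v ≠ 0) :
    finrank K (LinearMap.ker (dotProductBilin K K v)) = Fintype.card m - 1 := by
  have hf : dotProductBilin K K v ≠ 0 := by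
    obtain ⟨a, ha⟩ := Function.ne_iff.mp hv
    exact fun h => ha (by simpa using LinearMap.congr_fun h (Pi.single a 1))
  have := Module.Dual.finrank_ker_add_one_of_ne_zero hf
  rw [finrank_fintype_fun_eq_card] at this
  omega

end RankOneNodes

theorem isERCode_rankOneNode {K m ι : Type} [Field K] [Fintype m] [DecidableEq m] [Nonempty m]
    (u : ι → m → K)
    (hind : ∀ A : Finset ι, A.card = Fintype.card m → LinearIndependent K fun j : A => u j)
    (hu : ∀ i, u i ≠ 0) :
    IsERCode (Fintype.card m) (Fintype.card m) (Fintype.card m) (Fintype.card m - 1)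
      (Fintype.card m ^ 2 - 1) fun i => rankOneNode (u i) ⊤ := by
  have basis_on : ∀ A : Finset ι, A.card = Fintype.card m →
      ∃ b : Basis A K (m → K), ∀ j, b j = u j := fun A hA =>
    ⟨basisOfLinearIndependentOfCardEqFinrank' _ (hind A hA) (by simp [hA]), fun _ => by simp⟩
  refine ⟨inferInstance, finrank_matrix_quotient_scalars, fun i => ?_, fun A hA => ?_,
    fun x A _ hA => ?_⟩
  · simpa using finrank_rankOneNode_le (u i) ⊤
  · obtain ⟨b, hb⟩ := basis_on A hA
    rw [← Finset.sum_coe_sort, ← sum_rankOneNode_eq_top b]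
    simp only [hb]
  · obtain ⟨b, hb⟩ := basis_on A hA
    refine ⟨fun j => rankOneNode (u j) (LinearMap.ker (dotProductBilin K K (u x))),
      fun j _ => ⟨rankOneNode_mono _ le_top, ?_⟩, ?_⟩
    · exact (finrank_rankOneNode_le _ _).trans (finrank_ker_dotProductBilin (hu x)).le
    · rw [← Finset.sum_coe_sort]
      simpa [hb] using rankOneNode_le_sum_rankOneNode_ker b (u x)

theorem linearIndependent_pow_of_injective {K ι : Type*} [Field K] [Fintype ι] {t : ι → K}
    (ht : Function.Injective t) {k : ℕ} (hk : Fintype.card ι = k) :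
    LinearIndependent K fun i (a : Fin k) => t i ^ (a : ℕ) := by
  subst hk
  set e := Fintype.equivFin ι
  have hrows : LinearIndependent K (vandermonde (t ∘ e.symm)).row :=
    linearIndependent_rows_iff_isUnit.mpr <| (isUnit_iff_isUnit_det _).mpr <|
      isUnit_iff_ne_zero.mpr <| det_vandermonde_ne_zero_iff.mpr (ht.comp e.symm.injective)
  convert hrows.comp e e.injective using 1
  ext i a
  simp [vandermonde_apply]

theorem stmt0_general (k n : ℕ) (hk : 2 ≤ k) :
    ∃ q : ℕ, IsPrimePow q ∧
      ∃ (K : Type) (_ : Field K) (_ : Fintype K), Fintype.card K = q ∧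
        ∃ (V : Type) (_ : AddCommGroup V) (_ : Module K V)
          (W : Fin n → Submodule K V),
          IsERCode k k k (k - 1) (k ^ 2 - 1) W := by
  obtain ⟨q, hnq, hq⟩ := Nat.exists_infinite_primes n
  have := Fact.mk hq
  obtain ⟨t⟩ : Nonempty (Fin n ↪ ZMod q) :=
    Function.Embedding.nonempty_of_card_le (by simpa using hnq)
  have : Nonempty (Fin k) := ⟨⟨0, by omega⟩⟩
  let u : Fin n → Fin k → ZMod q := fun i a => t i ^ (a : ℕ)
  have hind (A : Finset (Fin n)) (hA : A.card = Fintype.card (Fin k)) :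
      LinearIndependent (ZMod q) fun j : A => u j :=
    linearIndependent_pow_of_injective (t.injective.comp Subtype.val_injective) (by simpa using hA)
  have hu (i : Fin n) : u i ≠ 0 := fun h => by simpa [u] using congrFun h ⟨0, by omega⟩
  refine ⟨q, hq.isPrimePow, ZMod q, inferInstance, inferInstance, ZMod.card q, _, inferInstance,
    inferInstance, fun i => rankOneNode (u i) ⊤, ?_⟩
  simpa using isERCode_rankOneNode u hind hu

/-- For all integers `k ≥ 2` and `n > k`, there exist a prime power `q`
and an `(n, k, k)` linear exact-repair regeneration code over `𝔽_q` with parameters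
`(α, β, F) = (k, k - 1, k ^ 2 - 1)`. -/
theorem stmt0 (k n : ℕ) (hk : 2 ≤ k) (hn : k < n) :
    ∃ q : ℕ, IsPrimePow q ∧
      ∃ (K : Type) (_ : Field K) (_ : Fintype K), Fintype.card K = q ∧
        ∃ (V : Type) (_ : AddCommGroup V) (_ : Module K V)
          (W : Fin n → Submodule K V),
          IsERCode k k k (k - 1) (k ^ 2 - 1) W :=
  stmt0_general k n hk
end

section
/- In the repair setup below, every repair subspace has full dimension: dim S_j = k−1 for every j ∈ A. -/
/-!
Replacing node `j` of the repair set `A` by the repaired node `x` gives `k` nodes, which span the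
whole space. Since `W x` lies in `∑_{i ∈ A} S i ≤ S j + ∑_{i ∈ A - j} W i`, the space is spanned by
`S j` together with `k - 1` nodes, so `k² - 1 ≤ dim S j + (k - 1) k`, i.e. `dim S j ≥ k - 1`.
-/

open Module

variable {K V ι : Type} [Field K] [AddCommGroup V] [Module K V]

theorem Submodule.finrank_sum_le [FiniteDimensional K V] (s : Finset ι) (p : ι → Submodule K V) :
    finrank K ↥(∑ i ∈ s, p i) ≤ ∑ i ∈ s, finrank K (p i) := by
  classical
  induction s using Finset.induction_on with
  | empty => simp only [Finset.sum_empty]; exact (finrank_bot K V).le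
  | insert a s ha ih =>
    rw [Finset.sum_insert ha, Finset.sum_insert ha]
    exact (Submodule.finrank_add_le_finrank_add_finrank _ _).trans (Nat.add_le_add_left ih _)

section Repair

variable [DecidableEq ι] {k : ℕ} {W S : ι → Submodule K V} {x j : ι} {A : Finset ι}

theorem sup_sum_erase_eq_top_of_repair
    (hdata : ∀ B : Finset ι, B.card = k → ∑ i ∈ B, W i = ⊤)
    (hx : x ∉ A) (hA : A.card = k) (hSW : ∀ i ∈ A, S i ≤ W i) (hrep : W x ≤ ∑ i ∈ A, S i)
    (hj : j ∈ A) :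
    S j ⊔ ∑ i ∈ A.erase j, W i = ⊤ := by
  have hxe : x ∉ A.erase j := fun h => hx (Finset.mem_of_mem_erase h)
  have hcard : (insert x (A.erase j)).card = k := by
    rw [Finset.card_insert_of_notMem hxe, Finset.card_erase_of_mem hj, hA]
    have := Finset.card_pos.mpr ⟨j, hj⟩
    omega
  have hWx : W x ≤ S j ⊔ ∑ i ∈ A.erase j, W i := by
    refine hrep.trans ?_
    rw [← Finset.add_sum_erase A S hj]
    exact sup_le_sup_left (Finset.sum_le_sum fun i hi => hSW i (Finset.mem_of_mem_erase hi)) _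
  rw [eq_top_iff, ← hdata _ hcard, Finset.sum_insert hxe]
  exact sup_le hWx le_sup_right

theorem finrank_le_finrank_repair_add [FiniteDimensional K V] {α : ℕ}
    (hWdim : ∀ i, finrank K (W i) ≤ α)
    (hdata : ∀ B : Finset ι, B.card = k → ∑ i ∈ B, W i = ⊤)
    (hx : x ∉ A) (hA : A.card = k) (hSW : ∀ i ∈ A, S i ≤ W i) (hrep : W x ≤ ∑ i ∈ A, S i)
    (hj : j ∈ A) :
    finrank K V ≤ finrank K (S j) + (k - 1) * α :=
  calc finrank K V
      = finrank K ↥(S j ⊔ ∑ i ∈ A.erase j, W i) := by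
        rw [sup_sum_erase_eq_top_of_repair hdata hx hA hSW hrep hj, finrank_top]
    _ ≤ finrank K (S j) + finrank K ↥(∑ i ∈ A.erase j, W i) :=
        Submodule.finrank_add_le_finrank_add_finrank _ _
    _ ≤ finrank K (S j) + ∑ i ∈ A.erase j, finrank K (W i) :=
        Nat.add_le_add_left (Submodule.finrank_sum_le _ _) _
    _ ≤ finrank K (S j) + (k - 1) * α := by
        grw [Finset.sum_le_card_nsmul _ _ α fun i _ => hWdim i]
        rw [Finset.card_erase_of_mem hj, hA, smul_eq_mul]

end Repair

theorem stmt4_general {K : Type} [Field K] {V : Type} [AddCommGroup V] [Module K V]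
    (n k : ℕ)
    (W : Fin n → Submodule K V)
    (hW : IsERCode k k k (k - 1) (k ^ 2 - 1) W)
    (x : Fin n) (A : Finset (Fin n)) (hx : x ∉ A) (hA : A.card = k)
    (S : Fin n → Submodule K V)
    (hSW : ∀ j ∈ A, S j ≤ W j)
    (hSdim : ∀ j ∈ A, Module.finrank K (S j) ≤ k - 1)
    (hrep : W x ≤ ∑ j ∈ A, S j)
    :
    ∀ j ∈ A, Module.finrank K (S j) = k - 1 := by
  obtain ⟨hfin, hF, hWdim, hdata, -⟩ := hW
  intro j hj
  have hbound := finrank_le_finrank_repair_add hWdim hdata hx hA hSW hrep hj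
  have hk : 1 ≤ k := hA ▸ Finset.card_pos.mpr ⟨j, hj⟩
  have hsq : k ^ 2 = (k - 1) * k + k := by
    obtain ⟨m, rfl⟩ := Nat.exists_eq_add_of_le' hk
    simp only [Nat.add_sub_cancel]; ring
  have := hSdim j hj
  omega

/-- in the repair setup, every repair subspace has full dimension
`k - 1`. -/
theorem stmt4 {K : Type} [Field K] {V : Type} [AddCommGroup V] [Module K V]
    (n k : ℕ) (hk : 2 ≤ k) (hn : k + 1 ≤ n)
    (W : Fin n → Submodule K V)
    (hW : IsERCode k k k (k - 1) (k ^ 2 - 1) W)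
    (x : Fin n) (A : Finset (Fin n)) (hx : x ∉ A) (hA : A.card = k)
    (S : Fin n → Submodule K V)
    (hSW : ∀ j ∈ A, S j ≤ W j)
    (hSdim : ∀ j ∈ A, Module.finrank K (S j) ≤ k - 1)
    (hrep : W x ≤ ∑ j ∈ A, S j)
    :
    ∀ j ∈ A, Module.finrank K (S j) = k - 1 :=
  stmt4_general n k W hW x A hx hA S hSW hSdim hrep
end

section
/- In the repair setup below, there exist nonzero vectors t_j ∈ W_j for j ∈ A such that ∑_{j∈A} t_j = 0 and W_j = S_j ⊕ span(t_j) (an internal direct sum) for every j ∈ A. -/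
open Module Submodule Function

namespace Submodule

variable {K V ι : Type*} [Field K] [AddCommGroup V] [Module K V]

theorem finsetSum_le {s : Finset ι} {p : ι → Submodule K V} {q : Submodule K V}
    (h : ∀ i ∈ s, p i ≤ q) : ∑ i ∈ s, p i ≤ q :=
  Finset.sum_induction p (· ≤ q) (fun _ _ => sup_le) bot_le h

noncomputable def finsetSumMap (s : Finset ι) (p : ι → Submodule K V) :
    (Π i : s, p i) →ₗ[K] V :=
  ∑ i : s, (p i).subtype ∘ₗ LinearMap.proj i

@[simp]
theorem finsetSumMap_apply (s : Finset ι) (p : ι → Submodule K V) (u : Π i : s, p i) :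
    finsetSumMap s p u = ∑ i, (u i : V) := by
  simp [finsetSumMap]

theorem finsetSum_le_range_finsetSumMap (s : Finset ι) (p : ι → Submodule K V) :
    ∑ i ∈ s, p i ≤ LinearMap.range (finsetSumMap s p) := by
  classical
  refine finsetSum_le fun i hi v hv => ⟨Pi.single ⟨i, hi⟩ ⟨v, hv⟩, ?_⟩
  rw [finsetSumMap_apply, Finset.sum_eq_single ⟨i, hi⟩ (fun j _ hj => by simp [hj]) (by simp)]
  simp

variable [FiniteDimensional K V]

theorem finrank_finsetSum_add_finrank_ker_le (s : Finset ι) (p : ι → Submodule K V) :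
    finrank K ↥(∑ i ∈ s, p i) + finrank K (LinearMap.ker (finsetSumMap s p)) ≤
      ∑ i ∈ s, finrank K (p i) := by
  have := (finsetSumMap s p).finrank_range_add_finrank_ker
  rw [finrank_pi_fintype, Finset.sum_coe_sort s fun i => finrank K (p i)] at this
  have := finrank_mono (finsetSum_le_range_finsetSumMap s p)
  omega

theorem finrank_finsetSum_le (s : Finset ι) (p : ι → Submodule K V) :
    finrank K ↥(∑ i ∈ s, p i) ≤ ∑ i ∈ s, finrank K (p i) :=
  (Nat.le_add_right _ _).trans (finrank_finsetSum_add_finrank_ker_le s p)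

theorem exists_finsetSum_eq_zero_of_finrank_lt {s : Finset ι} {p : ι → Submodule K V}
    (h : finrank K V < ∑ i ∈ s, finrank K (p i)) :
    ∃ g : ι → V,
      (∀ i ∈ s, g i ∈ p i) ∧ ∑ i ∈ s, g i = 0 ∧ ∃ i ∈ s, g i ≠ 0 := by
  classical
  have hker : LinearMap.ker (finsetSumMap s p) ≠ ⊥ := LinearMap.ker_ne_bot_of_finrank_lt <| by
    rwa [finrank_pi_fintype, Finset.sum_coe_sort s fun i => finrank K (p i)]
  obtain ⟨u, hu, hu0⟩ := exists_mem_ne_zero_of_ne_bot hker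
  obtain ⟨⟨i, hi⟩, hui⟩ := Function.ne_iff.mp hu0
  refine ⟨fun i => if hi : i ∈ s then u ⟨i, hi⟩ else 0, fun i hi => by simp [hi],
    ?_, i, hi, by simpa [hi] using hui⟩
  rw [← Finset.sum_coe_sort]
  simpa using hu

theorem eq_zero_of_finsetSum_eq_zero_of_finrank_le {s : Finset ι} {p : ι → Submodule K V}
    (h : ∑ i ∈ s, finrank K (p i) ≤ finrank K ↥(∑ i ∈ s, p i)) {g : ι → V}
    (hg : ∀ i ∈ s, g i ∈ p i) (hg0 : ∑ i ∈ s, g i = 0) : ∀ i ∈ s, g i = 0 := by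
  have hker : LinearMap.ker (finsetSumMap s p) = ⊥ := by
    have := finrank_finsetSum_add_finrank_ker_le s p
    exact finrank_eq_zero.mp (by omega)
  intro i hi
  have hu : (fun i : s => (⟨g i, hg i i.2⟩ : p i)) ∈ LinearMap.ker (finsetSumMap s p) := by
    simpa [Finset.sum_attach s g] using hg0
  rw [hker, mem_bot] at hu
  simpa using congrFun hu ⟨i, hi⟩

theorem sup_span_singleton_eq_of_finrank_le {S W : Submodule K V} {t : V} (hSW : S ≤ W)
    (htW : t ∈ W) (htS : t ∉ S) (hdim : finrank K W ≤ finrank K S + 1) :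
    S ⊔ K ∙ t = W := by
  have ht0 : t ≠ 0 := fun h => htS (h ▸ S.zero_mem)
  refine eq_of_le_of_finrank_le (sup_le hSW ((span_singleton_le_iff_mem _ _).mpr htW)) ?_
  have := finrank_sup_add_finrank_inf_eq S (K ∙ t)
  rw [((disjoint_span_singleton' ht0).mpr htS).eq_bot, finrank_bot,
    finrank_span_singleton ht0] at this
  omega

end Submodule

namespace ExactRepair

variable {K V ι : Type*} [Field K] [AddCommGroup V] [Module K V] [DecidableEq ι]
  {W S : ι → Submodule K V} {A : Finset ι} {j : ι} {k : ℕ}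

theorem sum_update_sub_one (hj : j ∈ A) (hA : A.card = k) :
    ∑ i ∈ A, update (fun _ => k) j (k - 1) i = k ^ 2 - 1 := by
  obtain ⟨m, rfl⟩ : ∃ m, k = m + 1 :=
    Nat.exists_eq_add_one.mpr (hA ▸ Finset.card_pos.mpr ⟨j, hj⟩)
  rw [Finset.sum_update_of_mem hj, Finset.sum_const, Finset.sdiff_singleton_eq_erase,
    Finset.card_erase_of_mem hj, hA, smul_eq_mul, Nat.add_sub_cancel]
  have : (m + 1) ^ 2 = m + m * (m + 1) + 1 := by ring
  omega

theorem mem_update_of_mem {g : ι → V} (hgW : ∀ i ∈ A, g i ∈ W i) (hgS : g j ∈ S j) :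
    ∀ i ∈ A, g i ∈ update W j (S j) i := fun i hi => by
  rcases eq_or_ne i j with rfl | h
  · rwa [update_self]
  · rw [update_of_ne h]
    exact hgW i hi

theorem sum_update_eq_top {x : ι} (hx : x ∉ A) (hj : j ∈ A)
    (hrec : ∑ i ∈ insert x (A.erase j), W i = ⊤) (hSW : ∀ i ∈ A, S i ≤ W i)
    (hrep : W x ≤ ∑ i ∈ A, S i) : ∑ i ∈ A, update W j (S j) i = ⊤ := by
  have hSU : ∀ i ∈ A, S i ≤ update W j (S j) i := fun i hi => by
    rcases eq_or_ne i j with rfl | h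
    · rw [update_self]
    · rw [update_of_ne h]
      exact hSW i hi
  have hWU : ∀ i ∈ A.erase j, W i = update W j (S j) i := fun i hi => by
    simp [Finset.ne_of_mem_erase hi]
  rw [eq_top_iff, ← hrec, Finset.sum_insert fun h => hx (Finset.mem_of_mem_erase h)]
  refine sup_le (hrep.trans (Finset.sum_le_sum hSU)) ?_
  rw [Finset.sum_congr rfl hWU]
  exact Finset.sum_le_sum_of_subset (A.erase_subset j)

theorem finrank_update_eq [FiniteDimensional K V] (hV : finrank K V = k ^ 2 - 1)
    (hA : A.card = k) (hW : ∀ i ∈ A, finrank K (W i) ≤ k) (hS : finrank K (S j) ≤ k - 1)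
    (hj : j ∈ A) (htop : ∑ i ∈ A, update W j (S j) i = ⊤) :
    ∀ i ∈ A, finrank K (update W j (S j) i) = update (fun _ => k) j (k - 1) i := by
  have hle : ∀ i ∈ A, finrank K (update W j (S j) i) ≤ update (fun _ => k) j (k - 1) i :=
    fun i hi => by
      rcases eq_or_ne i j with rfl | h
      · rwa [update_self, update_self]
      · rw [update_of_ne h, update_of_ne h]
        exact hW i hi
  refine (Finset.sum_eq_sum_iff_of_le hle).1 (le_antisymm (Finset.sum_le_sum hle) ?_)
  rw [sum_update_sub_one hj hA, ← hV, ← finrank_top, ← htop]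
  exact finrank_finsetSum_le A _

end ExactRepair

open ExactRepair

theorem stmt5_general {K : Type} [Field K] {V : Type} [AddCommGroup V] [Module K V]
    (n k : ℕ) (hk : 2 ≤ k)
    (W : Fin n → Submodule K V)
    (hW : IsERCode k k k (k - 1) (k ^ 2 - 1) W)
    (x : Fin n) (A : Finset (Fin n)) (hx : x ∉ A) (hA : A.card = k)
    (S : Fin n → Submodule K V)
    (hSW : ∀ j ∈ A, S j ≤ W j)
    (hSdim : ∀ j ∈ A, Module.finrank K (S j) ≤ k - 1)
    (hrep : W x ≤ ∑ j ∈ A, S j)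
    :
    ∃ t : Fin n → V,
      (∀ j ∈ A, t j ≠ 0) ∧ (∀ j ∈ A, t j ∈ W j) ∧ (∑ j ∈ A, t j = 0) ∧
      (∀ j ∈ A, Disjoint (S j) (Submodule.span K {t j}) ∧
        S j ⊔ Submodule.span K {t j} = W j) := by
  obtain ⟨_, hF, hα, hrec, -⟩ := hW
  have htop : ∀ j ∈ A, ∑ i ∈ A, update W j (S j) i = ⊤ := fun j hj =>
    sum_update_eq_top hx hj (hrec _ <| by
      rw [Finset.card_insert_of_notMem fun h => hx (Finset.mem_of_mem_erase h),
        Finset.card_erase_of_mem hj, hA]; omega) hSW hrep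
  have hdim : ∀ j ∈ A, ∀ i ∈ A,
      finrank K (update W j (S j) i) = update (fun _ => k) j (k - 1) i := fun j hj =>
    finrank_update_eq hF hA (fun i _ => hα i) (hSdim j hj) hj (htop j hj)
  have hWk : ∀ i ∈ A, finrank K (W i) = k := fun i hi => by
    obtain ⟨j, hj, hji⟩ := Finset.exists_mem_ne (by omega : 1 < A.card) i
    have := hdim j hj i hi
    rwa [update_of_ne hji.symm, update_of_ne hji.symm] at this
  have hSk : ∀ j ∈ A, finrank K (S j) = k - 1 := fun j hj => by
    have := hdim j hj j hj
    rwa [update_self, update_self] at this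
  obtain ⟨t, htW, hsum, i, hi, hti⟩ := exists_finsetSum_eq_zero_of_finrank_lt (p := W) <| by
    rw [Finset.sum_congr rfl hWk, Finset.sum_const, hA, smul_eq_mul, hF, ← sq]
    exact Nat.sub_lt (by positivity) one_pos
  have htS : ∀ j ∈ A, t j ∉ S j := fun j hj htj => hti <|
    eq_zero_of_finsetSum_eq_zero_of_finrank_le (p := update W j (S j))
      (by rw [htop j hj, finrank_top, Finset.sum_congr rfl (hdim j hj),
        sum_update_sub_one hj hA, hF])
      (mem_update_of_mem htW htj) hsum i hi
  have ht0 : ∀ j ∈ A, t j ≠ 0 := fun j hj h => htS j hj (h ▸ (S j).zero_mem)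
  refine ⟨t, ht0, htW, hsum, fun j hj =>
    ⟨(disjoint_span_singleton' (ht0 j hj)).mpr (htS j hj), ?_⟩⟩
  exact sup_span_singleton_eq_of_finrank_le (hSW j hj) (htW j hj) (htS j hj)
    (by rw [hWk j hj, hSk j hj]; omega)

/-- in the repair setup, there exist nonzero vectors `t j ∈ W j`
(`j ∈ A`) summing to zero with `W j = S j ⊕ span {t j}` (internal direct sum) for
every `j ∈ A`. -/
theorem stmt5 {K : Type} [Field K] {V : Type} [AddCommGroup V] [Module K V]
    (n k : ℕ) (hk : 2 ≤ k) (hn : k + 1 ≤ n)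
    (W : Fin n → Submodule K V)
    (hW : IsERCode k k k (k - 1) (k ^ 2 - 1) W)
    (x : Fin n) (A : Finset (Fin n)) (hx : x ∉ A) (hA : A.card = k)
    (S : Fin n → Submodule K V)
    (hSW : ∀ j ∈ A, S j ≤ W j)
    (hSdim : ∀ j ∈ A, Module.finrank K (S j) ≤ k - 1)
    (hrep : W x ≤ ∑ j ∈ A, S j)
    :
    ∃ t : Fin n → V,
      (∀ j ∈ A, t j ≠ 0) ∧ (∀ j ∈ A, t j ∈ W j) ∧ (∑ j ∈ A, t j = 0) ∧
      (∀ j ∈ A, Disjoint (S j) (Submodule.span K {t j}) ∧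
        S j ⊔ Submodule.span K {t j} = W j) :=
  stmt5_general n k hk W hW x A hx hA S hSW hSdim hrep
end

section
/- In the repair setup below, let t_j ∈ W_j (j ∈ A) be any nonzero vectors satisfying ∑_{j∈A} t_j = 0 and W_j = S_j ⊕ span(t_j) for every j ∈ A, and set T := span{t_j : j ∈ A}. Then dim T = k−1, and moreover T = span{t_j : j ∈ B} for every subset B ⊆ A with |B| = k−1 (equivalently, every k−1 of the vectors t_j, j ∈ A, are linearly independent). -/
open Module Submodule

section Span

variable {R M ι : Type*} [Ring R] [AddCommGroup M] [Module R M] [DecidableEq ι]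
  {t : ι → M} {A : Finset ι}

theorem Submodule.span_image_erase_of_sum_eq_zero (htsum : ∑ j ∈ A, t j = 0) {a : ι}
    (ha : a ∈ A) : span R (t '' ↑(A.erase a)) = span R (t '' ↑A) := by
  refine le_antisymm (span_mono (Set.image_mono (Finset.erase_subset a A))) ?_
  rw [span_le]
  rintro _ ⟨j, hj, rfl⟩
  obtain rfl | hja := eq_or_ne j a
  · rw [eq_neg_of_add_eq_zero_left ((Finset.add_sum_erase A t hj).trans htsum)]
    exact neg_mem (sum_mem fun i hi => subset_span ⟨i, hi, rfl⟩)
  · exact subset_span ⟨j, Finset.mem_erase.2 ⟨hja, hj⟩, rfl⟩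

theorem Submodule.span_image_eq_of_sum_eq_zero (htsum : ∑ j ∈ A, t j = 0) {B : Finset ι}
    (hBA : B ⊆ A) (hB : B.card = A.card - 1) : span R (t '' ↑B) = span R (t '' ↑A) := by
  rcases A.eq_empty_or_nonempty with rfl | hA
  · rw [Finset.subset_empty.1 hBA]
  obtain ⟨a, ha, haB⟩ := Finset.exists_mem_notMem_of_card_lt_card (s := B) (t := A)
    (by have := hA.card_pos; omega)
  have hB_eq : B = A.erase a := Finset.eq_of_subset_of_card_le
    (Finset.subset_erase.2 ⟨hBA, haB⟩) (by rw [Finset.card_erase_of_mem ha, hB])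
  rw [hB_eq, span_image_erase_of_sum_eq_zero htsum ha]

end Span

theorem Submodule.sum_span_singleton {R M ι : Type*} [Semiring R] [AddCommMonoid M]
    [Module R M] (t : ι → M) (A : Finset ι) : ∑ j ∈ A, R ∙ t j = span R (t '' ↑A) := by
  classical
  induction A using Finset.induction_on with
  | empty => simp
  | insert a A ha ih =>
    rw [Finset.sum_insert ha, Finset.coe_insert, Set.image_insert_eq, span_insert, ih,
      add_eq_sup]

section FiniteRank

variable {K V ι : Type*} [DivisionRing K] [AddCommGroup V] [Module K V]

theorem finrank_span_image_le_card_sub_one_of_sum_eq_zero [DecidableEq ι] {t : ι → V}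
    {A : Finset ι} (htsum : ∑ j ∈ A, t j = 0) :
    finrank K (span K (t '' ↑A)) ≤ A.card - 1 := by
  classical
  rcases A.eq_empty_or_nonempty with rfl | ⟨a, ha⟩
  · rw [Finset.coe_empty, Set.image_empty, span_empty]
    exact (finrank_bot K V).le
  rw [← span_image_erase_of_sum_eq_zero htsum ha, ← Finset.card_erase_of_mem ha,
    ← Finset.coe_image]
  exact (finrank_span_finset_le_card _).trans Finset.card_image_le

variable [FiniteDimensional K V]

theorem Submodule.finrank_sum_le_sum_finrank (A : Finset ι) (W : ι → Submodule K V) :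
    finrank K ↥(∑ j ∈ A, W j) ≤ ∑ j ∈ A, finrank K (W j) := by
  classical
  induction A using Finset.induction_on with
  | empty =>
    rw [Finset.sum_empty, zero_eq_bot]
    exact (finrank_bot K V).le
  | insert a A ha ih =>
    rw [Finset.sum_insert ha, Finset.sum_insert ha, add_eq_sup]
    exact (finrank_add_le_finrank_add_finrank _ _).trans (Nat.add_le_add_left ih _)

theorem Submodule.finrank_sum_le_of_sup_span_singleton_eq {A : Finset ι}
    {W S : ι → Submodule K V} {t : ι → V} (hW : ∀ j ∈ A, S j ⊔ K ∙ t j = W j) :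
    finrank K ↥(∑ j ∈ A, W j) ≤ ∑ j ∈ A, finrank K (S j) + finrank K (span K (t '' ↑A)) := by
  have hsum : ∑ j ∈ A, W j = (∑ j ∈ A, S j) ⊔ span K (t '' ↑A) := by
    rw [← sum_span_singleton, ← add_eq_sup, ← Finset.sum_add_distrib]
    exact (Finset.sum_congr rfl hW).symm
  rw [hsum]
  exact (finrank_add_le_finrank_add_finrank _ _).trans
    (Nat.add_le_add_right (finrank_sum_le_sum_finrank A S) _)

end FiniteRank

theorem stmt6_general {K : Type} [Field K] {V : Type} [AddCommGroup V] [Module K V]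
    (n k : ℕ)
    (W : Fin n → Submodule K V)
    (hW : IsERCode k k k (k - 1) (k ^ 2 - 1) W)
    (A : Finset (Fin n)) (hA : A.card = k)
    (S : Fin n → Submodule K V)
    (hSdim : ∀ j ∈ A, Module.finrank K (S j) ≤ k - 1)
    (t : Fin n → V)
    (htsum : ∑ j ∈ A, t j = 0)
    (htds : ∀ j ∈ A, Disjoint (S j) (Submodule.span K {t j}) ∧
      S j ⊔ Submodule.span K {t j} = W j)
    :
    Module.finrank K (Submodule.span K (t '' ↑A)) = k - 1 ∧
    ∀ B ⊆ A, B.card = k - 1 →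
      Submodule.span K (t '' ↑B) = Submodule.span K (t '' ↑A) := by
  obtain ⟨_, hF, -, hdata, -⟩ := hW
  refine ⟨le_antisymm ?_ ?_, fun B hBA hB => span_image_eq_of_sum_eq_zero htsum hBA (hA ▸ hB)⟩
  · exact hA ▸ finrank_span_image_le_card_sub_one_of_sum_eq_zero htsum
  have hdim : k ^ 2 - 1 ≤ k * (k - 1) + finrank K (span K (t '' ↑A)) :=
    calc k ^ 2 - 1 = finrank K ↥(∑ j ∈ A, W j) := by rw [hdata A hA, finrank_top, hF]
      _ ≤ ∑ j ∈ A, finrank K (S j) + finrank K (span K (t '' ↑A)) :=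
        finrank_sum_le_of_sup_span_singleton_eq fun j hj => (htds j hj).2
      _ ≤ k * (k - 1) + finrank K (span K (t '' ↑A)) := by
        gcongr
        simpa [hA] using Finset.sum_le_card_nsmul A _ _ hSdim
  rcases k with _ | k
  · exact Nat.zero_le _
  · rw [Nat.add_sub_cancel, show (k + 1) ^ 2 - 1 = (k + 1) * k + k by ring_nf; omega] at hdim
    omega

/-- in the repair setup, given nonzero `t j ∈ W j` with
`∑ j ∈ A, t j = 0` and `W j = S j ⊕ span {t j}`, the space `T = span {t j : j ∈ A}`
has dimension `k - 1`, and `T` is spanned by any `k - 1` of the vectors `t j`,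
`j ∈ A`. -/
theorem stmt6 {K : Type} [Field K] {V : Type} [AddCommGroup V] [Module K V]
    (n k : ℕ) (hk : 2 ≤ k) (hn : k + 1 ≤ n)
    (W : Fin n → Submodule K V)
    (hW : IsERCode k k k (k - 1) (k ^ 2 - 1) W)
    (x : Fin n) (A : Finset (Fin n)) (hx : x ∉ A) (hA : A.card = k)
    (S : Fin n → Submodule K V)
    (hSW : ∀ j ∈ A, S j ≤ W j)
    (hSdim : ∀ j ∈ A, Module.finrank K (S j) ≤ k - 1)
    (hrep : W x ≤ ∑ j ∈ A, S j)
    (t : Fin n → V)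
    (ht0 : ∀ j ∈ A, t j ≠ 0) (htW : ∀ j ∈ A, t j ∈ W j)
    (htsum : ∑ j ∈ A, t j = 0)
    (htds : ∀ j ∈ A, Disjoint (S j) (Submodule.span K {t j}) ∧
      S j ⊔ Submodule.span K {t j} = W j)
    :
    Module.finrank K (Submodule.span K (t '' ↑A)) = k - 1 ∧
    ∀ B ⊆ A, B.card = k - 1 →
      Submodule.span K (t '' ↑B) = Submodule.span K (t '' ↑A) :=
  stmt6_general n k W hW A hA S hSdim t htsum htds
end

section
/- In the repair setup below, the repair subspaces {S_j : j ∈ A} are mutually linearly independent: if vectors v_j ∈ S_j (j ∈ A) satisfy ∑_{j∈A} v_j = 0, then v_j = 0 for every j ∈ A. -/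
open Module

namespace Submodule

variable {K V : Type*} [DivisionRing K] [AddCommGroup V] [Module K V] [FiniteDimensional K V]

theorem disjoint_of_sup_eq_top {s t : Submodule K V} (hsup : s ⊔ t = ⊤)
    (hdim : finrank K s + finrank K t ≤ finrank K V) : Disjoint s t := by
  have h := finrank_sup_add_finrank_inf_eq s t
  rw [hsup, finrank_top] at h
  exact disjoint_iff.mpr (finrank_eq_zero.mp (by omega))

theorem finrank_sum_le_sum_finrank_s7 {ι : Type*} (s : Finset ι) (W : ι → Submodule K V) :
    finrank K ↥(∑ j ∈ s, W j) ≤ ∑ j ∈ s, finrank K (W j) := by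
  classical
  induction s using Finset.induction_on with
  | empty =>
    simp only [Finset.sum_empty, Submodule.zero_eq_bot]
    exact (_root_.finrank_bot K V).le
  | insert i s hi ih =>
    rw [Finset.sum_insert hi, Finset.sum_insert hi, add_eq_sup]
    exact (finrank_add_le_finrank_add_finrank _ _).trans (by omega)

end Submodule

theorem Finset.eq_zero_of_sum_eq_zero_of_disjoint_sum_erase {R M ι : Type*} [Ring R]
    [AddCommGroup M] [Module R M] [DecidableEq ι] {A : Finset ι} {S : ι → Submodule R M}
    (hS : ∀ j ∈ A, Disjoint (S j) (∑ i ∈ A.erase j, S i)) {v : ι → M}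
    (hv : ∀ j ∈ A, v j ∈ S j) (hsum : ∑ j ∈ A, v j = 0) : ∀ j ∈ A, v j = 0 := by
  intro j hj
  have hvj : v j = -∑ i ∈ A.erase j, v i :=
    eq_neg_of_add_eq_zero_left (by rwa [Finset.add_sum_erase A v hj])
  have hmem : v j ∈ ∑ i ∈ A.erase j, S i := by
    rw [hvj]
    refine neg_mem (Submodule.sum_mem _ fun i hi => ?_)
    exact Finset.single_le_sum (f := S) (fun _ _ => zero_le) hi
      (hv i (Finset.mem_of_mem_erase hi))
  exact (Submodule.disjoint_def.mp (hS j hj)) _ (hv j hj) hmem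

namespace IsERCode

variable {K : Type} [Field K] {V : Type} [AddCommGroup V] [Module K V] {ι : Type}
  {k d α β F : ℕ} {W : ι → Submodule K V}

theorem sup_sum_erase_eq_top [DecidableEq ι] (hW : IsERCode k d α β F W) {x j : ι}
    {A : Finset ι} (hx : x ∉ A) (hA : A.card = k) (hj : j ∈ A) :
    W x ⊔ ∑ i ∈ A.erase j, W i = ⊤ := by
  have hxj : x ∉ A.erase j := fun h => hx (Finset.mem_of_mem_erase h)
  have hcard : (insert x (A.erase j)).card = k := by
    rw [Finset.card_insert_of_notMem hxj, Finset.card_erase_of_mem hj, hA]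
    exact Nat.sub_add_cancel (hA ▸ Finset.card_pos.mpr ⟨j, hj⟩)
  simpa only [Finset.sum_insert hxj, Submodule.add_eq_sup] using hW.2.2.2.1 _ hcard

theorem finrank_sum_le (hW : IsERCode k d α β F W) (s : Finset ι) :
    finrank K ↥(∑ j ∈ s, W j) ≤ s.card * α := by
  have := hW.1
  calc finrank K ↥(∑ j ∈ s, W j) ≤ ∑ j ∈ s, finrank K (W j) :=
        Submodule.finrank_sum_le_sum_finrank_s7 s W
    _ ≤ s.card * α := by simpa using Finset.sum_le_card_nsmul s _ α fun j _ => hW.2.2.1 j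

end IsERCode

theorem stmt7_general {K : Type} [Field K] {V : Type} [AddCommGroup V] [Module K V]
    (n k : ℕ)
    (W : Fin n → Submodule K V)
    (hW : IsERCode k k k (k - 1) (k ^ 2 - 1) W)
    (x : Fin n) (A : Finset (Fin n)) (hx : x ∉ A) (hA : A.card = k)
    (S : Fin n → Submodule K V)
    (hSW : ∀ j ∈ A, S j ≤ W j)
    (hSdim : ∀ j ∈ A, Module.finrank K (S j) ≤ k - 1)
    (hrep : W x ≤ ∑ j ∈ A, S j)
    :
    ∀ v : Fin n → V, (∀ j ∈ A, v j ∈ S j) → (∑ j ∈ A, v j = 0) →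
      ∀ j ∈ A, v j = 0 := by
  have := hW.1
  intro v hv hsum
  refine Finset.eq_zero_of_sum_eq_zero_of_disjoint_sum_erase (fun j hj => ?_) hv hsum
  have hSW' : ∑ i ∈ A.erase j, S i ≤ ∑ i ∈ A.erase j, W i :=
    Finset.sum_le_sum fun i hi => hSW i (Finset.mem_of_mem_erase hi)
  have hSsum : ∑ i ∈ A, S i ≤ S j ⊔ ∑ i ∈ A.erase j, W i := by
    rw [← Finset.add_sum_erase A S hj, Submodule.add_eq_sup]
    exact sup_le_sup_left hSW' _
  have hsup : S j ⊔ ∑ i ∈ A.erase j, W i = ⊤ :=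
    top_unique <| hW.sup_sum_erase_eq_top hx hA hj ▸ sup_le (hrep.trans hSsum) le_sup_right
  have hdim : finrank K (S j) + finrank K ↥(∑ i ∈ A.erase j, W i) ≤ finrank K V := by
    have hU := hW.finrank_sum_le (A.erase j)
    rw [Finset.card_erase_of_mem hj, hA] at hU
    have hk : 1 ≤ k := hA ▸ Finset.card_pos.mpr ⟨j, hj⟩
    rw [hW.2.1]
    nlinarith [hSdim j hj, Nat.sub_add_cancel hk, Nat.sub_add_cancel (Nat.one_le_pow 2 k hk)]
  exact (Submodule.disjoint_of_sup_eq_top hsup hdim).mono_right hSW'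

/-- in the repair setup, the repair subspaces `{S j : j ∈ A}` are
mutually linearly independent: if `v j ∈ S j` (`j ∈ A`) and `∑ j ∈ A, v j = 0`,
then every `v j = 0`. -/
theorem stmt7 {K : Type} [Field K] {V : Type} [AddCommGroup V] [Module K V]
    (n k : ℕ) (hk : 2 ≤ k) (hn : k + 1 ≤ n)
    (W : Fin n → Submodule K V)
    (hW : IsERCode k k k (k - 1) (k ^ 2 - 1) W)
    (x : Fin n) (A : Finset (Fin n)) (hx : x ∉ A) (hA : A.card = k)
    (S : Fin n → Submodule K V)
    (hSW : ∀ j ∈ A, S j ≤ W j)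
    (hSdim : ∀ j ∈ A, Module.finrank K (S j) ≤ k - 1)
    (hrep : W x ≤ ∑ j ∈ A, S j)
    :
    ∀ v : Fin n → V, (∀ j ∈ A, v j ∈ S j) → (∑ j ∈ A, v j = 0) →
      ∀ j ∈ A, v j = 0 :=
  stmt7_general n k W hW x A hx hA S hSW hSdim hrep
end

section
/- In the repair setup below, for every i ∈ A the node subspace W_i is not contained in the total repair space ∑_{j∈A} S_j; i.e., the set difference W_i ∖ (∑_{j∈A} S_j) is nonempty. -/
namespace Submodule

variable {K V ι : Type*} [Field K] [AddCommGroup V] [Module K V]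

theorem finrank_finsetSum_le_card_mul [FiniteDimensional K V] {W : ι → Submodule K V}
    {s : Finset ι} {a : ℕ} (hW : ∀ l ∈ s, Module.finrank K (W l) ≤ a) :
    Module.finrank K ↥(∑ l ∈ s, W l) ≤ s.card * a :=
  calc Module.finrank K ↥(∑ l ∈ s, W l) ≤ ∑ l ∈ s, Module.finrank K (W l) :=
        Finset.le_sum_of_subadditive (fun U : Submodule K V ↦ Module.finrank K U)
          (finrank_bot K V).le (fun U U' ↦ finrank_add_le_finrank_add_finrank U U') s W
    _ ≤ s.card * a := by simpa using Finset.sum_le_card_nsmul s _ a hW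

variable [DecidableEq ι]

theorem finsetSum_le_sup_sum_sdiff (W : ι → Submodule K V) {s t : Finset ι}
    {T : Submodule K V} (h : ∀ l ∈ s ∩ t, W l ≤ T) :
    ∑ l ∈ s, W l ≤ T ⊔ ∑ l ∈ s \ t, W l := by
  rw [← Finset.sum_inter_add_sum_sdiff s t, add_eq_sup]
  exact sup_le_sup_right (Finset.sum_induction _ (· ≤ T) (fun _ _ ↦ sup_le) bot_le h) _

theorem finsetSum_le_sup_sum_sdiff_of_le {S W : ι → Submodule K V} {s : Finset ι}
    (t : Finset ι) (hSW : ∀ l ∈ s \ t, S l ≤ W l) :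
    ∑ l ∈ s, S l ≤ (∑ l ∈ t, S l) ⊔ ∑ l ∈ s \ t, W l :=
  calc ∑ l ∈ s, S l ≤ (∑ l ∈ t, S l) ⊔ ∑ l ∈ s \ t, S l :=
        finsetSum_le_sup_sum_sdiff S fun _ hl ↦
          Finset.single_le_sum_of_canonicallyOrdered (Finset.mem_inter.mp hl).2
    _ ≤ (∑ l ∈ t, S l) ⊔ ∑ l ∈ s \ t, W l := sup_le_sup_left (Finset.sum_le_sum hSW) _

theorem sum_pair_sup_sum_sdiff_eq_top {W S : ι → Submodule K V} {A : Finset ι} {x i j : ι}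
    (hdata : ∑ l ∈ insert x (A.erase j), W l = ⊤) (hx : x ∉ A) (hji : j ≠ i)
    (hSW : ∀ l ∈ A, S l ≤ W l) (hrep : W x ≤ ∑ l ∈ A, S l) (hWi : W i ≤ ∑ l ∈ A, S l) :
    (∑ l ∈ {i, j}, S l) ⊔ ∑ l ∈ A \ {i, j}, W l = ⊤ := by
  have hsdiff : insert x (A.erase j) \ {x, i} = A \ {i, j} := by
    ext l
    simp only [Finset.mem_sdiff, Finset.mem_insert, Finset.mem_erase, Finset.mem_singleton]
    grind
  rw [eq_top_iff, ← hdata]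
  calc ∑ l ∈ insert x (A.erase j), W l ≤ (∑ l ∈ A, S l) ⊔ ∑ l ∈ A \ {i, j}, W l := by
        rw [← hsdiff]
        refine finsetSum_le_sup_sum_sdiff W fun l hl ↦ ?_
        obtain rfl | rfl : l = x ∨ l = i := by simpa using (Finset.mem_inter.mp hl).2
        exacts [hrep, hWi]
    _ ≤ (∑ l ∈ {i, j}, S l) ⊔ ∑ l ∈ A \ {i, j}, W l := by
        refine sup_le (finsetSum_le_sup_sum_sdiff_of_le _ fun l hl ↦ hSW l ?_) le_sup_right
        exact Finset.sdiff_subset hl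

end Submodule

theorem stmt8_general {K : Type} [Field K] {V : Type} [AddCommGroup V] [Module K V]
    (n k : ℕ) (hk : 2 ≤ k)
    (W : Fin n → Submodule K V)
    (hW : IsERCode k k k (k - 1) (k ^ 2 - 1) W)
    (x : Fin n) (A : Finset (Fin n)) (hx : x ∉ A) (hA : A.card = k)
    (S : Fin n → Submodule K V)
    (hSW : ∀ j ∈ A, S j ≤ W j)
    (hSdim : ∀ j ∈ A, Module.finrank K (S j) ≤ k - 1)
    (hrep : W x ≤ ∑ j ∈ A, S j)
    :
    ∀ i ∈ A, ∃ v ∈ W i, v ∉ ∑ j ∈ A, S j := by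
  obtain ⟨_, hF, hα, hdata, -⟩ := hW
  intro i hi
  rw [← SetLike.not_le_iff_exists]
  intro hWi
  obtain ⟨j, hj, hji⟩ := A.exists_mem_ne (by omega) i
  have hpair : {i, j} ⊆ A := Finset.insert_subset hi (Finset.singleton_subset_iff.mpr hj)
  have hcard : (insert x (A.erase j)).card = k := by
    rw [Finset.card_insert_of_notMem (fun h ↦ hx (Finset.mem_of_mem_erase h)),
      Finset.card_erase_of_mem hj, hA]
    omega
  have htop := Submodule.sum_pair_sup_sum_sdiff_eq_top (hdata _ hcard) hx hji hSW hrep hWi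
  have hdim : k ^ 2 - 1 ≤ 2 * (k - 1) + (k - 2) * k :=
    calc k ^ 2 - 1 = Module.finrank K ↥((∑ l ∈ {i, j}, S l) ⊔ ∑ l ∈ A \ {i, j}, W l) := by
          rw [htop, finrank_top, hF]
      _ ≤ ({i, j} : Finset _).card * (k - 1) + (A \ {i, j}).card * k :=
        (Submodule.finrank_add_le_finrank_add_finrank _ _).trans <| add_le_add
          (Submodule.finrank_finsetSum_le_card_mul fun l hl ↦ hSdim l (hpair hl))
          (Submodule.finrank_finsetSum_le_card_mul fun l _ ↦ hα l)
      _ = 2 * (k - 1) + (k - 2) * k := by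
        rw [Finset.card_sdiff_of_subset hpair, hA, Finset.card_pair (Ne.symm hji)]
  obtain ⟨m, rfl⟩ : ∃ m, k = m + 2 := ⟨k - 2, by omega⟩
  simp only [Nat.add_sub_cancel] at hdim
  ring_nf at hdim
  omega

/-- in the repair setup, for every `i ∈ A` the node subspace `W i` is
not contained in the total repair space `∑ j ∈ A, S j`: there is a vector of `W i`
outside of it. -/
theorem stmt8 {K : Type} [Field K] {V : Type} [AddCommGroup V] [Module K V]
    (n k : ℕ) (hk : 2 ≤ k) (hn : k + 1 ≤ n)
    (W : Fin n → Submodule K V)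
    (hW : IsERCode k k k (k - 1) (k ^ 2 - 1) W)
    (x : Fin n) (A : Finset (Fin n)) (hx : x ∉ A) (hA : A.card = k)
    (S : Fin n → Submodule K V)
    (hSW : ∀ j ∈ A, S j ≤ W j)
    (hSdim : ∀ j ∈ A, Module.finrank K (S j) ≤ k - 1)
    (hrep : W x ≤ ∑ j ∈ A, S j)
    :
    ∀ i ∈ A, ∃ v ∈ W i, v ∉ ∑ j ∈ A, S j :=
  stmt8_general n k hk W hW x A hx hA S hSW hSdim hrep
end

section
/- In the well-aligned setup below, if W_⋆ is well-aligned with respect to (A;x), then the data-recovery property holds for every k-subset of {W_j : j ∈ A} ∪ {W_⋆} containing W_⋆: for every ℓ ∈ A, W_⋆ + ∑_{j∈A∖{ℓ}} W_j = 𝓕. -/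
/-- `Wst` is well-aligned with respect to `(A; x)`, for a fixed choice of repair
subspaces `S j ⊆ W j` (`j ∈ A`) and the subspace `T`: `Wst` is spanned by `k`
vectors `w i = (∑ j ∈ A, s i j) + τ i` with `s i j ∈ S j` and `τ i ∈ T`, such that
for every `j ∈ A` one of the `s i j` vanishes and the remaining `k - 1` of them
are linearly independent. -/
def WellAligned {K : Type} [Field K] {V : Type} [AddCommGroup V] [Module K V]
    {n : ℕ} (k : ℕ) (A : Finset (Fin n))
    (S : Fin n → Submodule K V) (T : Submodule K V)
    (Wst : Submodule K V) : Prop :=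
  ∃ (w : Fin k → V) (s : Fin k → Fin n → V) (τ : Fin k → V),
    Wst = Submodule.span K (Set.range w) ∧
    (∀ (i : Fin k), ∀ j ∈ A, s i j ∈ S j) ∧
    (∀ i : Fin k, τ i ∈ T) ∧
    (∀ i : Fin k, w i = (∑ j ∈ A, s i j) + τ i) ∧
    (∀ j ∈ A, ∃ ij : Fin k, s ij j = 0 ∧
      LinearIndependent K (fun i : {i : Fin k // i ≠ ij} => s i.1 j))

/-!
Let `U := Wst + ∑_{j ∈ A \ {ℓ}} W j`. Since the `t j` sum to zero, `t ℓ` lies in `U` along with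
the other `t j`, so `T ≤ U`. Each spanning vector `w i = ∑_j s i j + τ i` of `Wst` then forces
`s i ℓ ∈ U`, and the `k - 1` independent vectors `s i ℓ` fill the `(k - 1)`-dimensional `S ℓ`.
Hence `W ℓ = S ℓ ⊕ ⟨t ℓ⟩ ≤ U`, and `U` contains the `k` nodes of `A`, which span everything.
-/

section

variable {K V : Type*} [Field K] [AddCommGroup V] [Module K V]

theorem Submodule.forall_mem_of_sum_mem_of_forall_mem_erase {ι : Type*} [DecidableEq ι]
    {U : Submodule K V} {A : Finset ι} {ℓ : ι} (hℓ : ℓ ∈ A) {f : ι → V}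
    (hsum : ∑ j ∈ A, f j ∈ U) (hf : ∀ j ∈ A.erase ℓ, f j ∈ U) :
    ∀ j ∈ A, f j ∈ U := by
  intro j hj
  by_cases hjℓ : j = ℓ
  · subst hjℓ
    rw [← Finset.add_sum_erase A f hj] at hsum
    exact (U.add_mem_iff_left (U.sum_mem hf)).1 hsum
  · exact hf j (Finset.mem_erase.2 ⟨hjℓ, hj⟩)

theorem Submodule.le_of_linearIndependent_of_card_eq_finrank {ι : Type*} [Fintype ι]
    {S U : Submodule K V} [FiniteDimensional K S] {v : ι → V} (hv : LinearIndependent K v)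
    (hvS : ∀ i, v i ∈ S) (hcard : Fintype.card ι = Module.finrank K S) (hvU : ∀ i, v i ∈ U) :
    S ≤ U := by
  have hspan : Submodule.span K (Set.range v) = S :=
    Submodule.eq_of_le_of_finrank_eq (Submodule.span_le.2 (Set.range_subset_iff.2 hvS))
      ((finrank_span_eq_card hv).trans hcard)
  exact hspan ▸ Submodule.span_le.2 (Set.range_subset_iff.2 hvU)

theorem Submodule.span_image_le_sum_erase_of_sum_eq_zero {ι : Type*} [DecidableEq ι]
    {W : ι → Submodule K V} {A : Finset ι} {ℓ : ι} (hℓ : ℓ ∈ A) {t : ι → V}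
    (htW : ∀ j ∈ A, t j ∈ W j) (htsum : ∑ j ∈ A, t j = 0) :
    Submodule.span K (t '' A) ≤ ∑ j ∈ A.erase ℓ, W j := by
  refine Submodule.span_le.2 (Set.image_subset_iff.2 ?_)
  refine Submodule.forall_mem_of_sum_mem_of_forall_mem_erase hℓ (htsum ▸ zero_mem _) ?_
  intro j hj
  exact Finset.single_le_sum (f := W) (fun _ _ => bot_le) hj (htW j (Finset.mem_of_mem_erase hj))

end

theorem stmt14_general {K : Type} [Field K] {V : Type} [AddCommGroup V] [Module K V]
    (n k : ℕ)
    (W : Fin n → Submodule K V)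
    (hW : IsERCode k k k (k - 1) (k ^ 2 - 1) W)
    (A : Finset (Fin n)) (hA : A.card = k)
    (S : Fin n → Submodule K V)
    (hSW : ∀ j ∈ A, S j ≤ W j)
    (hSdim : ∀ j ∈ A, Module.finrank K (S j) = k - 1)
    (t : Fin n → V)
    (htW : ∀ j ∈ A, t j ∈ W j)
    (htsum : ∑ j ∈ A, t j = 0)
    (htds : ∀ j ∈ A, Disjoint (S j) (Submodule.span K {t j}) ∧
      S j ⊔ Submodule.span K {t j} = W j)
    (Wst : Submodule K V)
    (hWA : WellAligned k A S (Submodule.span K (t '' ↑A)) Wst)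
    :
    ∀ ℓ ∈ A, Wst ⊔ ∑ j ∈ A.erase ℓ, W j = ⊤ := by
  classical
  intro ℓ hℓ
  obtain ⟨w, s, τ, hWst, hsS, hτT, hw, hind⟩ := hWA
  have : FiniteDimensional K V := hW.1
  set U := Wst ⊔ ∑ j ∈ A.erase ℓ, W j
  have hWU : ∀ j ∈ A.erase ℓ, W j ≤ U := fun j hj =>
    (Finset.single_le_sum (fun _ _ => bot_le) hj).trans le_sup_right
  have hTU : Submodule.span K (t '' ↑A) ≤ U :=
    (Submodule.span_image_le_sum_erase_of_sum_eq_zero hℓ htW htsum).trans le_sup_right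
  have hsU : ∀ i, s i ℓ ∈ U := by
    intro i
    have hwU : w i ∈ U := le_sup_left (a := Wst) (hWst ▸ Submodule.subset_span ⟨i, rfl⟩)
    have hsum : ∑ j ∈ A, s i j ∈ U := eq_sub_of_add_eq (hw i).symm ▸ U.sub_mem hwU (hTU (hτT i))
    refine U.forall_mem_of_sum_mem_of_forall_mem_erase hℓ hsum (fun j hj => ?_) ℓ hℓ
    have hjA := Finset.mem_of_mem_erase hj
    exact hWU j hj (hSW j hjA (hsS i j hjA))
  obtain ⟨iℓ, -, hLI⟩ := hind ℓ hℓ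
  have hSU : S ℓ ≤ U :=
    Submodule.le_of_linearIndependent_of_card_eq_finrank hLI (fun i => hsS i.1 ℓ hℓ)
      (by simp [hSdim ℓ hℓ]) (fun i => hsU i.1)
  have hWℓU : W ℓ ≤ U := by
    rw [← (htds ℓ hℓ).2]
    exact sup_le hSU ((Submodule.span_singleton_le_iff_mem _ _).2
      (hTU (Submodule.subset_span (Set.mem_image_of_mem t hℓ))))
  rw [eq_top_iff, ← hW.2.2.2.1 A hA, ← Finset.add_sum_erase A W hℓ]
  exact sup_le hWℓU le_sup_right

/-- in the well-aligned setup, `Wst` together with any `k - 1` of the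
nodes in `A` spans the ambient space: for every `ℓ ∈ A`,
`Wst + ∑_{j ∈ A \ {ℓ}} W j = 𝓕`. -/
theorem stmt14 {K : Type} [Field K] {V : Type} [AddCommGroup V] [Module K V]
    (n k : ℕ) (hk : 2 ≤ k) (hn : k + 1 ≤ n)
    (W : Fin n → Submodule K V)
    (hW : IsERCode k k k (k - 1) (k ^ 2 - 1) W)
    (x : Fin n) (A : Finset (Fin n)) (hx : x ∉ A) (hA : A.card = k)
    (S : Fin n → Submodule K V)
    (hSW : ∀ j ∈ A, S j ≤ W j)
    (hSdim : ∀ j ∈ A, Module.finrank K (S j) = k - 1)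
    (hrep : W x ≤ ∑ j ∈ A, S j)
    (t : Fin n → V)
    (ht0 : ∀ j ∈ A, t j ≠ 0) (htW : ∀ j ∈ A, t j ∈ W j)
    (htsum : ∑ j ∈ A, t j = 0)
    (htds : ∀ j ∈ A, Disjoint (S j) (Submodule.span K {t j}) ∧
      S j ⊔ Submodule.span K {t j} = W j)
    (Wst : Submodule K V)
    (hWA : WellAligned k A S (Submodule.span K (t '' ↑A)) Wst)
    :
    ∀ ℓ ∈ A, Wst ⊔ ∑ j ∈ A.erase ℓ, W j = ⊤ :=
  stmt14_general n k W hW A hA S hSW hSdim t htW htsum htds Wst hWA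
end
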